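/- Let σ_1, σ_2 ∈ Σ_{r^m}* with the concatenation σ_2·σ_1 nonempty, and let σ ∈ Σ_{r^m}* be a nonempty word. Then Γ_{σ_1}^{-1}(ξ(σ)) belongs to the topological closure of the set {ξ(σ_2·σ^k·σ_1) : k ∈ ℕ} ⊆ ℝ^m, where σ^k denotes the k-fold concatenation of σ. -/

import Mathlib

/-- The alphabet `Σ_{r^m}` of digit vectors. -/
abbrev Alpha (r m : ℕ) := Fin m → Fin r
abbrev Word (r m : ℕ) := List (Alpha r m)

/-- `ρ(b₁⋯bₙ) = Σᵢ r^(i-1)·bᵢ` (least significant digit first), viewed in `ℝ^m`. -/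
noncomputable def rho (r m : ℕ) : Word r m → (Fin m → ℝ)
  | [] => 0
  | b :: w => (fun j => (b j : ℝ)) + (r : ℝ) • rho r m w

/-- `Γ_σ(x) = r^|σ|·x + ρ(σ)`. -/
noncomputable def Gam (r m : ℕ) (σ : Word r m) (x : Fin m → ℝ) : Fin m → ℝ :=
  (r : ℝ) ^ σ.length • x + rho r m σ

/-- The inverse bijection `Γ_σ⁻¹(y) = (y - ρ(σ))/r^|σ|`. -/
noncomputable def GamInv (r m : ℕ) (σ : Word r m) (y : Fin m → ℝ) : Fin m → ℝ :=
  ((r : ℝ) ^ σ.length)⁻¹ • (y - rho r m σ)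

/-- `ξ(σ) = ρ(σ)/(1 - r^|σ|)` (meaningful for nonempty `σ`). -/
noncomputable def xi (r m : ℕ) (σ : Word r m) : Fin m → ℝ :=
  (1 - (r : ℝ) ^ σ.length)⁻¹ • rho r m σ

/-- `ρ(L) = {ρ(σ) : σ ∈ L}`. -/
def rhoSet (r m : ℕ) (L : Set (Word r m)) : Set (Fin m → ℝ) :=
  {x | ∃ σ ∈ L, x = rho r m σ}

/-- `ξ(L) = {ξ(σ) : σ ∈ L, σ ≠ ε}`. -/
def xiSet (r m : ℕ) (L : Set (Word r m)) : Set (Fin m → ℝ) :=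
  {x | ∃ σ ∈ L, σ ≠ [] ∧ x = xi r m σ}

/-- Kleene star of a language. -/
def kstar' {α : Type*} (L : Set (List α)) : Set (List α) :=
  {w | ∃ ws : List (List α), (∀ u ∈ ws, u ∈ L) ∧ w = ws.flatten}

/-- Concatenation of two languages. -/
def catL {α : Type*} (A B : Set (List α)) : Set (List α) :=
  {w | ∃ a ∈ A, ∃ b ∈ B, w = a ++ b}

/-- `chainLang σ Ls n = σ_{n+1}·(L_n)*·σ_n ⋯ (L_1)*·σ_1`. -/
def chainLang {α : Type*} (σ : ℕ → List α) (Ls : ℕ → Set (List α)) : ℕ → Set (List α)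
  | 0 => {σ 1}
  | n + 1 => catL {σ (n + 2)} (catL (kstar' (Ls (n + 1))) (chainLang σ Ls n))

/-- `catDown σ hi lo = σ_hi·σ_{hi-1}⋯σ_lo` (empty if `lo > hi`). -/
def catDown {α : Type*} (σ : ℕ → List α) (hi lo : ℕ) : List α :=
  ((List.range (hi + 1 - lo)).map fun j => σ (hi - j)).flatten

/-- `catUp σ k = σ_1·σ_2⋯σ_k`. -/
def catUp {α : Type*} (σ : ℕ → List α) (k : ℕ) : List α :=
  ((List.range k).map fun j => σ (j + 1)).flatten

/-- `σ^k`, the `k`-fold concatenation of `σ`. -/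
def repK {α : Type*} (σ : List α) (k : ℕ) : List α := (List.replicate k σ).flatten

/-- `ℝ₋·X = {t·x : t ≤ 0, x ∈ X}`. -/
def negSmul {m : ℕ} (X : Set (Fin m → ℝ)) : Set (Fin m → ℝ) :=
  {y | ∃ t : ℝ, t ≤ 0 ∧ ∃ x ∈ X, y = t • x}

/-- The cone `C(R)` generated by a finite set of rays. -/
def coneOf {m : ℕ} (R : Finset ((Fin m → ℝ) × ℝ)) : Set ((Fin m → ℝ) × ℝ) :=
  {y | ∃ t : ((Fin m → ℝ) × ℝ) → ℝ, (∀ p, 0 ≤ t p) ∧ y = ∑ p ∈ R, t p • p}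

/-- The polyhedral convex set `P(R) = {x : (x,1) ∈ C(R)}`. -/
def polyOf {m : ℕ} (R : Finset ((Fin m → ℝ) × ℝ)) : Set (Fin m → ℝ) :=
  {x | (x, (1 : ℝ)) ∈ coneOf R}

/-! `ξ(w)` is the fixed point of `Γ_w`, and `Γ_{σ₂·σ^k·σ₁} = Γ_{σ₂} ∘ Γ_σ^k ∘ Γ_{σ₁}`, so
`y_k = Γ_{σ₁}(ξ(σ₂·σ^k·σ₁))` is the fixed point of `Γ_{σ₁·σ₂} ∘ Γ_σ^k`. As `Γ_σ` multiplies
distances from its fixed point `ξ(σ)` by `r^|σ|`, the vector `(1 - r^{|σ₁σ₂| + k|σ|})(y_k - ξ(σ))`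
does not depend on `k`; hence `y_k → ξ(σ)`, and applying the continuous map `Γ_{σ₁}⁻¹` gives the
claim. -/

open Filter Topology Function

theorem Function.IsFixedPt.iterate_sub_eq_pow_smul {M E : Type*} [Monoid M] [AddGroup E]
    [MulAction M E] {f : E → E} {c : M} (hf : ∀ x y, f x - f y = c • (x - y)) {p : E}
    (hp : IsFixedPt f p) (k : ℕ) (x : E) : f^[k] x - p = c ^ k • (x - p) := by
  induction k with
  | zero => simp
  | succ k ih => rw [iterate_succ_apply', ← hp.eq, hf, ih, hp.eq, smul_smul, pow_succ']

variable {r m : ℕ}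

lemma one_lt_pow_length (hr : 1 < r) {w : Word r m} (hw : w ≠ []) : 1 < (r : ℝ) ^ w.length :=
  one_lt_pow₀ (by exact_mod_cast hr) (by simpa using hw)

lemma rho_append (u v : Word r m) :
    rho r m (u ++ v) = rho r m u + (r : ℝ) ^ u.length • rho r m v := by
  induction u with
  | nil => simp [rho]
  | cons b w ih =>
    simp only [List.cons_append, rho, ih, List.length_cons, smul_add, pow_succ', mul_smul,
      add_assoc]

lemma Gam_nil : Gam r m [] = id := by
  ext x
  simp [Gam, rho]

lemma Gam_append (u v : Word r m) : Gam r m (u ++ v) = Gam r m u ∘ Gam r m v := by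
  ext x : 1
  simp only [Gam, comp_apply, rho_append, List.length_append, pow_add, mul_smul, smul_add]
  abel

lemma repK_succ {α : Type*} (σ : List α) (k : ℕ) : repK σ (k + 1) = σ ++ repK σ k := by
  simp [repK, List.replicate_succ]

lemma Gam_repK (σ : Word r m) (k : ℕ) : Gam r m (repK σ k) = (Gam r m σ)^[k] := by
  induction k with
  | zero => exact Gam_nil
  | succ k ih => rw [repK_succ, Gam_append, ih, iterate_succ']

lemma Gam_sub_Gam (u : Word r m) (x y : Fin m → ℝ) :
    Gam r m u x - Gam r m u y = (r : ℝ) ^ u.length • (x - y) := by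
  simp only [Gam, smul_sub]
  abel

lemma GamInv_Gam (hr : r ≠ 0) (u : Word r m) (x : Fin m → ℝ) :
    GamInv r m u (Gam r m u x) = x := by
  simp only [GamInv, Gam, add_sub_cancel_right]
  exact inv_smul_smul₀ (pow_ne_zero _ (by exact_mod_cast hr)) x

lemma continuous_GamInv (u : Word r m) : Continuous (GamInv r m u) := by
  unfold GamInv
  fun_prop

lemma isFixedPt_Gam_xi (hr : 1 < r) (w : Word r m) : IsFixedPt (Gam r m w) (xi r m w) := by
  rcases eq_or_ne w [] with rfl | hw
  · rw [Gam_nil]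
    exact isFixedPt_id _
  have hT : 1 - (r : ℝ) ^ w.length ≠ 0 := (sub_neg.mpr (one_lt_pow_length hr hw)).ne
  simp only [IsFixedPt, Gam, xi]
  match_scalars
  field_simp
  ring

lemma smul_sub_xi_eq (hr : 1 < r) {σ u : Word r m} {k : ℕ} {y : Fin m → ℝ}
    (hy : IsFixedPt (Gam r m u ∘ Gam r m (repK σ k)) y) :
    (1 - (r : ℝ) ^ u.length * ((r : ℝ) ^ σ.length) ^ k) • (y - xi r m σ) =
      Gam r m u (xi r m σ) - xi r m σ := by
  have hiter := (isFixedPt_Gam_xi hr σ).iterate_sub_eq_pow_smul (Gam_sub_Gam σ) k y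
  have hu := Gam_sub_Gam u (Gam r m (repK σ k) y) (xi r m σ)
  rw [Gam_repK, hiter, ← Gam_repK, ← comp_apply (f := Gam r m u), hy.eq] at hu
  linear_combination (norm := module) hu

lemma tendsto_xi_of_isFixedPt (hr : 1 < r) {σ : Word r m} (hσ : σ ≠ []) (u : Word r m)
    {y : ℕ → Fin m → ℝ} (hy : ∀ k, IsFixedPt (Gam r m u ∘ Gam r m (repK σ k)) (y k)) :
    Tendsto y atTop (𝓝 (xi r m σ)) := by
  set c : ℕ → ℝ := fun k => 1 - (r : ℝ) ^ u.length * ((r : ℝ) ^ σ.length) ^ k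
  have hc : Tendsto c atTop atBot := by
    have hpow := (tendsto_pow_atTop_atTop_of_one_lt (one_lt_pow_length hr hσ)).const_mul_atTop
      (pow_pos (by exact_mod_cast hr.pos : (0 : ℝ) < r) u.length)
    simpa [c, sub_eq_add_neg, add_comm] using tendsto_atBot_add_const_left _ 1
      (tendsto_neg_atTop_atBot.comp hpow)
  have hlim : Tendsto (fun k => xi r m σ + (c k)⁻¹ • (Gam r m u (xi r m σ) - xi r m σ)) atTop
      (𝓝 (xi r m σ)) := by
    simpa using tendsto_const_nhds.add
      ((tendsto_inv_atBot_zero.comp hc).smul_const (Gam r m u (xi r m σ) - xi r m σ))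
  refine hlim.congr' ((hc.eventually_lt_atBot 0).mono fun k hk => ?_)
  rw [← smul_sub_xi_eq hr (hy k), inv_smul_smul₀ hk.ne, add_sub_cancel]

theorem gamInv_xi_mem_closure_general
    (r m : ℕ) (hr : 2 ≤ r)
    (σ₁ σ₂ σ : Word r m) (hσ : σ ≠ []) :
    GamInv r m σ₁ (xi r m σ) ∈
      closure {x : Fin m → ℝ | ∃ k : ℕ, x = xi r m (σ₂ ++ repK σ k ++ σ₁)} := by
  have hfix : ∀ k, IsFixedPt (Gam r m (σ₁ ++ σ₂) ∘ Gam r m (repK σ k))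
      (Gam r m σ₁ (xi r m (σ₂ ++ repK σ k ++ σ₁))) := fun k => by
    simpa only [IsFixedPt, Gam_append, comp_apply] using
      congrArg (Gam r m σ₁) (isFixedPt_Gam_xi hr (σ₂ ++ repK σ k ++ σ₁))
  have hlim := ((continuous_GamInv σ₁).tendsto _).comp (tendsto_xi_of_isFixedPt hr hσ _ hfix)
  simp only [comp_def, GamInv_Gam (by omega : r ≠ 0)] at hlim
  exact mem_closure_of_tendsto hlim (Eventually.of_forall fun k => ⟨k, rfl⟩)

/-- `Γ_{σ₁}⁻¹(ξ(σ))` is in the closure of `{ξ(σ₂·σ^k·σ₁) : k ∈ ℕ}`. -/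
theorem gamInv_xi_mem_closure
    (r m : ℕ) (hr : 2 ≤ r) (hm : 1 ≤ m)
    (σ₁ σ₂ σ : Word r m) (h₂₁ : σ₂ ++ σ₁ ≠ []) (hσ : σ ≠ []) :
    GamInv r m σ₁ (xi r m σ) ∈
      closure {x : Fin m → ℝ | ∃ k : ℕ, x = xi r m (σ₂ ++ repK σ k ++ σ₁)} :=
  gamInv_xi_mem_closure_general r m hr σ₁ σ₂ σ hσ
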